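/- Theorem 5: for every state ρ and every ε ≥ 0, the one-shot coherence cost under DIO is characterized by the smoothed monotone C_{Δ,max}: C_{Δ,max}^ε(ρ) ≤ C_DIO^ε(ρ) ≤ C_{Δ,max}^ε(ρ) + 1. -/

import Mathlib

/-!
Lower bound: a DIO `Λ` commutes with `Δ`, so
`M Δ(Λ Ψ_M) - Λ Ψ_M = Λ (M Δ(Ψ_M) - Ψ_M) = Λ (1 - Ψ_M)` is positive; hence every state obtained
from `Ψ_M` has `C_{Δ,max} ≤ log₂ M`, and this passes to the smoothed quantities.

Upper bound: if `σ ≤ M Δ(σ)` with `M ≥ 2`, the measure-and-prepare channel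
`X ↦ Tr(Ψ_M X) σ + Tr((1 - Ψ_M) X) B` with `B = (M Δ(σ) - σ) / (M - 1)` is a DIO sending `Ψ_M`
to `σ`: it is covariant because `Δ(B) = Δ(σ)` and `Δ(σ) = σ / M + (1 - 1 / M) B`. The least
admissible `M` is at most `⌊2 ^ C_{Δ,max}(σ)⌋ + 1 ≤ 2 · 2 ^ C_{Δ,max}(σ)`, which costs at most
one bit.
-/

open scoped Matrix ComplexOrder

namespace OneShot

variable {ι κ : Type*} [Fintype ι] [DecidableEq ι] [Fintype κ] [DecidableEq κ]

/-- A quantum state: a positive semidefinite matrix with unit trace. -/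
def IsState (ρ : Matrix ι ι ℂ) : Prop := ρ.PosSemidef ∧ ρ.trace = 1

/-- An incoherent state: a state that is diagonal in the computational basis. -/
def IsIncoherent (ρ : Matrix ι ι ℂ) : Prop := IsState ρ ∧ ρ.IsDiag

/-- The completely dephasing channel `Δ`. -/
def dephase (ρ : Matrix ι ι ℂ) : Matrix ι ι ℂ := Matrix.diagonal fun i => ρ i i

/-- The max-relative entropy of coherence
`C_max(ρ) = min_{δ ∈ 𝓘} D_max(ρ‖δ) = log₂ min {λ ≥ 0 | ∃ δ ∈ 𝓘, ρ ≤ λ δ}`. -/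
noncomputable def Cmax (ρ : Matrix ι ι ℂ) : ℝ :=
  Real.logb 2 (sInf {l : ℝ | 0 ≤ l ∧ ∃ δ, IsIncoherent δ ∧ (l • δ - ρ).PosSemidef})

/-- `C_{Δ,max}(ρ) = log₂ min {λ ≥ 0 | ρ ≤ λ Δ(ρ)}`. -/
noncomputable def CDmax (ρ : Matrix ι ι ℂ) : ℝ :=
  Real.logb 2 (sInf {l : ℝ | 0 ≤ l ∧ (l • dephase ρ - ρ).PosSemidef})

/-- Complete positivity of a linear map on matrices. -/
def CompletelyPositive (Λ : Matrix ι ι ℂ →ₗ[ℂ] Matrix κ κ ℂ) : Prop :=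
  ∀ (k : ℕ) (M : Matrix (Fin k × ι) (Fin k × ι) ℂ), M.PosSemidef →
    (Matrix.of fun p q : Fin k × κ =>
      Λ (Matrix.of fun x y => M (p.1, x) (q.1, y)) p.2 q.2).PosSemidef

/-- Trace preservation. -/
def TracePreserving (Λ : Matrix ι ι ℂ →ₗ[ℂ] Matrix κ κ ℂ) : Prop :=
  ∀ A, (Λ A).trace = A.trace

/-- A maximally incoherent operation (MIO): a CPTP map sending every incoherent state
to an incoherent state. -/
def IsMIO (Λ : Matrix ι ι ℂ →ₗ[ℂ] Matrix κ κ ℂ) : Prop :=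
  CompletelyPositive Λ ∧ TracePreserving Λ ∧ ∀ δ, IsIncoherent δ → IsIncoherent (Λ δ)

/-- A dephasing-covariant incoherent operation (DIO): a CPTP map commuting with `Δ`. -/
def IsDIO (Λ : Matrix ι ι ℂ →ₗ[ℂ] Matrix ι ι ℂ) : Prop :=
  CompletelyPositive Λ ∧ TracePreserving Λ ∧ ∀ ρ, Λ (dephase ρ) = dephase (Λ ρ)

/-- An incoherent-preserving (Kraus) operator: `K δ Kᴴ` is a nonnegative multiple of an
incoherent state, for every incoherent state `δ`. -/
def IncoherentPreserving (K : Matrix κ ι ℂ) : Prop :=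
  ∀ δ : Matrix ι ι ℂ, IsIncoherent δ →
    ∃ c : ℝ, 0 ≤ c ∧ ∃ δ' : Matrix κ κ ℂ, IsIncoherent δ' ∧ K * δ * Kᴴ = (c : ℂ) • δ'

/-- An incoherent operation (IO). -/
def IsIO (Λ : Matrix ι ι ℂ →ₗ[ℂ] Matrix κ κ ℂ) : Prop :=
  ∃ (N : ℕ) (K : Fin N → Matrix κ ι ℂ),
    (∀ n, IncoherentPreserving (K n)) ∧ (∑ n, (K n)ᴴ * K n = 1) ∧
    ∀ ρ, Λ ρ = ∑ n, K n * ρ * (K n)ᴴ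

/-- A strictly incoherent operation (SIO). -/
def IsSIO (Λ : Matrix ι ι ℂ →ₗ[ℂ] Matrix κ κ ℂ) : Prop :=
  ∃ (N : ℕ) (K : Fin N → Matrix κ ι ℂ),
    (∀ n, IncoherentPreserving (K n)) ∧ (∀ n, IncoherentPreserving (K n)ᴴ) ∧
    (∑ n, (K n)ᴴ * K n = 1) ∧ ∀ ρ, Λ ρ = ∑ n, K n * ρ * (K n)ᴴ

/-- The outer product `|ψ⟩⟨ψ|`. -/
def outer (ψ : ι → ℂ) : Matrix ι ι ℂ := Matrix.of fun i j => ψ i * star (ψ j)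

/-- `T ψ` is the number of nonzero computational-basis coefficients of `ψ`. -/
noncomputable def T (ψ : ι → ℂ) : ℕ := (Finset.univ.filter fun i => ψ i ≠ 0).card

/-- A finite pure-state decomposition `ρ = Σ_j p_j |ψ_j⟩⟨ψ_j|`. -/
def IsDecomposition (ρ : Matrix ι ι ℂ) (n : ℕ) (p : Fin n → ℝ) (ψ : Fin n → ι → ℂ) : Prop :=
  (∀ j, 0 < p j) ∧ (∑ j, p j = 1) ∧ (∀ j, ∑ i, Complex.normSq (ψ j i) = 1) ∧
    ρ = ∑ j, p j • outer (ψ j)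

/-- `C_0(ρ) = min over decompositions of max_j log₂ T(ψ_j)`. -/
noncomputable def C0 (ρ : Matrix ι ι ℂ) : ℝ :=
  sInf { r | ∃ n p ψ, IsDecomposition ρ n p ψ ∧
    r = Real.logb 2 (↑(Finset.univ.sup fun j => T (ψ j)) : ℝ) }

/-- Matrix square root of a positive semidefinite matrix (junk value `0` elsewhere). -/
noncomputable def msqrt (A : Matrix ι ι ℂ) : Matrix ι ι ℂ :=
  letI := Classical.propDecidable A.PosSemidef
  if h : A.PosSemidef then
    (h.1.eigenvectorUnitary : Matrix ι ι ℂ) *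
      Matrix.diagonal ((↑) ∘ (h.1.eigenvalues · |>.sqrt)) *
      (star h.1.eigenvectorUnitary : Matrix ι ι ℂ)
  else 0

/-- Uhlmann fidelity `F(ρ,σ) = (Tr √(√ρ σ √ρ))²`. -/
noncomputable def Fid (ρ σ : Matrix ι ι ℂ) : ℝ :=
  ((msqrt (msqrt ρ * σ * msqrt ρ)).trace.re) ^ 2

/-- Smoothed `C_max`. -/
noncomputable def Cmaxeps (ρ : Matrix ι ι ℂ) (ε : ℝ) : ℝ :=
  sInf { r | ∃ ρ', IsState ρ' ∧ 1 - ε ≤ Fid ρ ρ' ∧ r = Cmax ρ' }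

/-- Smoothed `C_{Δ,max}`. -/
noncomputable def CDmaxeps (ρ : Matrix ι ι ℂ) (ε : ℝ) : ℝ :=
  sInf { r | ∃ ρ', IsState ρ' ∧ 1 - ε ≤ Fid ρ ρ' ∧ r = CDmax ρ' }

/-- Smoothed `C_0`. -/
noncomputable def C0eps (ρ : Matrix ι ι ℂ) (ε : ℝ) : ℝ :=
  sInf { r | ∃ ρ', IsState ρ' ∧ 1 - ε ≤ Fid ρ ρ' ∧ r = C0 ρ' }

/-- The maximally coherent state `Ψ_M = |Ψ_M⟩⟨Ψ_M|` of dimension `M`. -/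
noncomputable def PsiM (M : ℕ) : Matrix (Fin M) (Fin M) ℂ := Matrix.of fun _ _ => (1 : ℂ) / M

/-- One-shot coherence cost under MIO. -/
noncomputable def CMIOeps (ρ : Matrix ι ι ℂ) (ε : ℝ) : ℝ :=
  sInf { r | ∃ M : ℕ, 1 ≤ M ∧ r = Real.logb 2 M ∧
    ∃ Λ : Matrix (Fin M) (Fin M) ℂ →ₗ[ℂ] Matrix ι ι ℂ, IsMIO Λ ∧ 1 - ε ≤ Fid ρ (Λ (PsiM M)) }

/-- One-shot coherence cost under DIO. -/
noncomputable def CDIOeps (ρ : Matrix ι ι ℂ) (ε : ℝ) : ℝ :=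
  sInf { r | ∃ M : ℕ, 1 ≤ M ∧ r = Real.logb 2 M ∧
    ∃ Λ : Matrix (Fin M) (Fin M) ℂ →ₗ[ℂ] Matrix ι ι ℂ,
      CompletelyPositive Λ ∧ TracePreserving Λ ∧ (∀ ω, Λ (dephase ω) = dephase (Λ ω)) ∧
      1 - ε ≤ Fid ρ (Λ (PsiM M)) }

/-- One-shot coherence cost under IO. -/
noncomputable def CIOeps (ρ : Matrix ι ι ℂ) (ε : ℝ) : ℝ :=
  sInf { r | ∃ M : ℕ, 1 ≤ M ∧ r = Real.logb 2 M ∧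
    ∃ Λ : Matrix (Fin M) (Fin M) ℂ →ₗ[ℂ] Matrix ι ι ℂ, IsIO Λ ∧ 1 - ε ≤ Fid ρ (Λ (PsiM M)) }

/-- One-shot coherence cost under SIO. -/
noncomputable def CSIOeps (ρ : Matrix ι ι ℂ) (ε : ℝ) : ℝ :=
  sInf { r | ∃ M : ℕ, 1 ≤ M ∧ r = Real.logb 2 M ∧
    ∃ Λ : Matrix (Fin M) (Fin M) ℂ →ₗ[ℂ] Matrix ι ι ℂ, IsSIO Λ ∧ 1 - ε ≤ Fid ρ (Λ (PsiM M)) }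

/-- Matrix logarithm (base 2) via the spectral decomposition, with `log₂ 0 = 0` junk
convention on the kernel, and junk value `0` on non-Hermitian matrices. -/
noncomputable def mlog2 (A : Matrix ι ι ℂ) : Matrix ι ι ℂ :=
  letI := Classical.propDecidable A.IsHermitian
  if h : A.IsHermitian then
    (h.eigenvectorUnitary : Matrix ι ι ℂ) *
      Matrix.diagonal (fun i => (Real.logb 2 (h.eigenvalues i) : ℂ)) *
      (h.eigenvectorUnitary : Matrix ι ι ℂ)ᴴ
  else 0

/-- The relative entropy of coherence `C_r(ρ) = min_{δ ∈ 𝓘} S(ρ‖δ)`, where the minimum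
is (equivalently) restricted to those `δ` whose support contains the support of `ρ`,
on which `S(ρ‖δ) = Tr[ρ (log₂ ρ − log₂ δ)]` is finite. -/
noncomputable def Cr (ρ : Matrix ι ι ℂ) : ℝ :=
  sInf { r | ∃ δ, IsIncoherent δ ∧ (∀ v : ι → ℂ, δ.mulVec v = 0 → ρ.mulVec v = 0) ∧
    r = ((ρ * (mlog2 ρ - mlog2 δ)).trace).re }

/-- Von Neumann entropy (base 2). -/
noncomputable def vN (σ : Matrix ι ι ℂ) : ℝ := -((σ * mlog2 σ).trace.re)

/-- The coherence of formation. -/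
noncomputable def Cf (ρ : Matrix ι ι ℂ) : ℝ :=
  sInf { r | ∃ n p ψ, IsDecomposition ρ n p ψ ∧
    r = ∑ j, p j * vN (dephase (outer (ψ j))) }

/-- The set `A_ρ = { (1/t)[(1+t)Δ(ρ) − ρ] : t > 0, (1+t)Δ(ρ) − ρ ≥ 0 }`. -/
def Aset (ρ : Matrix ι ι ℂ) : Set (Matrix ι ι ℂ) :=
  { σ | ∃ t : ℝ, 0 < t ∧ ((1 + t) • dephase ρ - ρ).PosSemidef ∧
      σ = t⁻¹ • ((1 + t) • dephase ρ - ρ) }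

/-- The `n`-fold tensor power `ρ^{⊗ n}`. -/
def tpow (ρ : Matrix ι ι ℂ) (n : ℕ) : Matrix (Fin n → ι) (Fin n → ι) ℂ :=
  Matrix.of fun i j => ∏ t, ρ (i t) (j t)

open Matrix
open scoped Kronecker

section Dephase

omit [Fintype ι]

lemma dephase_add (A B : Matrix ι ι ℂ) : dephase (A + B) = dephase A + dephase B := by
  simp [dephase, ← diagonal_add]

lemma dephase_sub (A B : Matrix ι ι ℂ) : dephase (A - B) = dephase A - dephase B := by
  simp [dephase, ← diagonal_sub]

lemma dephase_smul (c : ℂ) (A : Matrix ι ι ℂ) : dephase (c • A) = c • dephase A := by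
  simp [dephase, ← diagonal_smul]

lemma dephase_dephase (A : Matrix ι ι ℂ) : dephase (dephase A) = dephase A := by
  simp [dephase]

end Dephase

lemma trace_dephase (A : Matrix ι ι ℂ) : (dephase A).trace = A.trace := by
  simp [dephase, trace]

omit [Fintype ι] in
lemma posSemidef_dephase {A : Matrix ι ι ℂ} (hA : A.PosSemidef) : (dephase A).PosSemidef :=
  PosSemidef.diagonal fun _ => hA.diag_nonneg

lemma posSemidef_one_sub_of_mul_self {P : Matrix ι ι ℂ} (hP : P.IsHermitian) (hPP : P * P = P) :
    (1 - P).PosSemidef := by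
  have h : (1 - P)ᴴ * (1 - P) = 1 - P := by
    rw [conjTranspose_sub, conjTranspose_one, hP.eq, sub_mul, mul_sub, mul_sub, hPP]
    simp
  exact h ▸ posSemidef_conjTranspose_mul_self _

lemma posSemidef_card_smul_dephase_sub {A : Matrix ι ι ℂ} (hA : A.PosSemidef) :
    ((Fintype.card ι : ℝ) • dephase A - A).PosSemidef := by
  -- `card • Δ(A) - A` is the Schur product of `A` with `card • (1 - P)`, where `P` is the
  -- projector onto the uniform superposition.
  set P : Matrix ι ι ℂ := of fun _ _ => (Fintype.card ι : ℂ)⁻¹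
  have hcard (i : ι) : (Fintype.card ι : ℂ) ≠ 0 :=
    Nat.cast_ne_zero.mpr (Fintype.card_pos_iff.mpr ⟨i⟩).ne'
  have hP : P.IsHermitian := by ext; simp [P]
  have hPP : P * P = P := by
    ext i j
    simp only [mul_apply, of_apply, Finset.sum_const, Finset.card_univ, nsmul_eq_mul, P]
    field_simp [hcard i]
  have h : (Fintype.card ι : ℝ) • dephase A - A = A ⊙ ((Fintype.card ι : ℂ) • (1 - P)) := by
    ext i j
    rw [Nat.cast_smul_eq_nsmul, ← Nat.cast_smul_eq_nsmul ℂ]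
    by_cases hij : i = j
    · subst hij
      simp only [dephase, Matrix.sub_apply, Matrix.smul_apply, diagonal_apply_eq, smul_eq_mul,
        hadamard, of_apply, one_apply_eq, P]
      field_simp [hcard i]
    · simp only [dephase, Matrix.sub_apply, Matrix.smul_apply, diagonal_apply_ne _ hij,
        smul_eq_mul, hadamard, of_apply, one_apply_ne hij, P]
      field_simp [hcard i]
      ring
  exact h ▸ hA.hadamard ((posSemidef_one_sub_of_mul_self hP hPP).smul (Nat.cast_nonneg _))

def dephasingRatios (σ : Matrix ι ι ℂ) : Set ℝ :=
  {l | 0 ≤ l ∧ (l • dephase σ - σ).PosSemidef}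

omit [Fintype ι] in
lemma CDmax_eq_logb_sInf (σ : Matrix ι ι ℂ) :
    CDmax σ = Real.logb 2 (sInf (dephasingRatios σ)) := rfl

lemma card_mem_dephasingRatios {σ : Matrix ι ι ℂ} (hσ : σ.PosSemidef) :
    (Fintype.card ι : ℝ) ∈ dephasingRatios σ :=
  ⟨Nat.cast_nonneg _, posSemidef_card_smul_dephase_sub hσ⟩

omit [Fintype ι] in
lemma mem_dephasingRatios_of_le {σ : Matrix ι ι ℂ} (hσ : σ.PosSemidef) {l m : ℝ}
    (hl : l ∈ dephasingRatios σ) (hlm : l ≤ m) : m ∈ dephasingRatios σ := by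
  refine ⟨hl.1.trans hlm, ?_⟩
  have h : m • dephase σ - σ = (l • dephase σ - σ) + (m - l) • dephase σ := by
    rw [sub_smul]; abel
  rw [h, RCLike.real_smul_eq_coe_smul (K := ℂ) (m - l)]
  exact hl.2.add ((posSemidef_dephase hσ).smul (Complex.zero_le_real.mpr (sub_nonneg.mpr hlm)))

lemma one_le_of_mem_dephasingRatios {σ : Matrix ι ι ℂ} (hσ : IsState σ) {l : ℝ}
    (hl : l ∈ dephasingRatios σ) : 1 ≤ l := by
  have h := hl.2.trace_nonneg
  rw [trace_sub, trace_smul, trace_dephase, hσ.2, Complex.real_smul, mul_one, sub_nonneg] at h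
  exact_mod_cast h

lemma one_le_sInf_dephasingRatios {σ : Matrix ι ι ℂ} (hσ : IsState σ) :
    1 ≤ sInf (dephasingRatios σ) :=
  le_csInf ⟨_, card_mem_dephasingRatios hσ.1⟩ fun _ => one_le_of_mem_dephasingRatios hσ

lemma CDmax_nonneg {σ : Matrix ι ι ℂ} (hσ : IsState σ) : 0 ≤ CDmax σ :=
  Real.logb_nonneg one_lt_two (one_le_sInf_dephasingRatios hσ)

lemma CDmax_le_logb_of_mem {σ : Matrix ι ι ℂ} (hσ : IsState σ) {l : ℝ}
    (hl : l ∈ dephasingRatios σ) : CDmax σ ≤ Real.logb 2 l :=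
  Real.logb_le_logb_of_le one_lt_two (one_pos.trans_le (one_le_sInf_dephasingRatios hσ))
    (csInf_le ⟨0, fun _ hl => hl.1⟩ hl)

lemma exists_nat_mem_dephasingRatios {σ : Matrix ι ι ℂ} (hσ : IsState σ) :
    ∃ M : ℕ, 2 ≤ M ∧ (M : ℝ) ∈ dephasingRatios σ ∧
      Real.logb 2 M ≤ CDmax σ + 1 := by
  set s := sInf (dephasingRatios σ)
  have hs : 1 ≤ s := one_le_sInf_dephasingRatios hσ
  have hlt : s < (⌊s⌋₊ + 1 : ℕ) := by push_cast; exact Nat.lt_floor_add_one s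
  have hle : ((⌊s⌋₊ + 1 : ℕ) : ℝ) ≤ 2 * s := by
    push_cast; linarith [Nat.floor_le (zero_le_one.trans hs)]
  obtain ⟨l, hl, hlM⟩ := exists_lt_of_csInf_lt ⟨_, card_mem_dephasingRatios hσ.1⟩ hlt
  refine ⟨⌊s⌋₊ + 1, by linarith [Nat.le_floor (n := 1) (by exact_mod_cast hs)],
    mem_dephasingRatios_of_le hσ.1 hl hlM.le, ?_⟩
  calc Real.logb 2 ((⌊s⌋₊ + 1 : ℕ) : ℝ) ≤ Real.logb 2 (2 * s) :=
        Real.logb_le_logb_of_le one_lt_two (by positivity) hle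
    _ = CDmax σ + 1 := by
        rw [Real.logb_mul two_ne_zero (by positivity), Real.logb_self_eq_one one_lt_two,
          CDmax_eq_logb_sInf]
        ring

def measurePrepare (P : Matrix ι ι ℂ) (C : Matrix κ κ ℂ) :
    Matrix ι ι ℂ →ₗ[ℂ] Matrix κ κ ℂ :=
  (traceLinearMap ι ℂ ℂ ∘ₗ LinearMap.mulLeft ℂ P).smulRight C

omit [Fintype κ] [DecidableEq κ] in
@[simp]
lemma measurePrepare_apply (P X : Matrix ι ι ℂ) (C : Matrix κ κ ℂ) :
    measurePrepare P C X = (P * X).trace • C := rfl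

omit [DecidableEq ι] in
lemma posSemidef_trace_mul_blocks {γ : Type*} [Fintype γ] [DecidableEq γ] {P : Matrix ι ι ℂ}
    (hP : P.PosSemidef) {A : Matrix (γ × ι) (γ × ι) ℂ} (hA : A.PosSemidef) :
    (of fun a b : γ => (P * of fun x y => A (a, x) (b, y)).trace).PosSemidef := by
  -- the entries are the sums of the `ι`-blocks of the Schur product `(J ⊗ Pᵀ) ⊙ A`,
  -- `J` the all-ones matrix
  have hJ : (of fun _ _ => 1 : Matrix γ γ ℂ).PosSemidef := by
    simpa [vecMulVec] using posSemidef_vecMulVec_self_star (fun _ : γ => (1 : ℂ))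
  set E : Matrix (γ × ι) γ ℂ := of fun p b => if p.1 = b then 1 else 0
  have h := ((hJ.kronecker hP.transpose).hadamard hA).conjTranspose_mul_mul_same E
  have e : (of fun a b : γ => (P * of fun x y => A (a, x) (b, y)).trace) =
      Eᴴ * ((of fun _ _ => 1) ⊗ₖ Pᵀ ⊙ A) * E := by
    ext a b
    simp [E, trace, mul_apply, Fintype.sum_prod_type, hadamard]
  rw [e]
  exact h

omit [DecidableEq κ] in
lemma completelyPositive_measurePrepare {P : Matrix ι ι ℂ} {C : Matrix κ κ ℂ}
    (hP : P.PosSemidef) (hC : C.PosSemidef) : CompletelyPositive (measurePrepare P C) :=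
  fun _ _ hA => (posSemidef_trace_mul_blocks hP hA).kronecker hC

omit [Fintype ι] [DecidableEq ι] [Fintype κ] [DecidableEq κ] in
lemma CompletelyPositive.add {Λ₁ Λ₂ : Matrix ι ι ℂ →ₗ[ℂ] Matrix κ κ ℂ}
    (h₁ : CompletelyPositive Λ₁) (h₂ : CompletelyPositive Λ₂) :
    CompletelyPositive (Λ₁ + Λ₂) :=
  fun k A hA => (h₁ k A hA).add (h₂ k A hA)

omit [Fintype ι] [DecidableEq ι] [Fintype κ] [DecidableEq κ] in
lemma CompletelyPositive.map_posSemidef {Λ : Matrix ι ι ℂ →ₗ[ℂ] Matrix κ κ ℂ}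
    (hΛ : CompletelyPositive Λ) {A : Matrix ι ι ℂ} (hA : A.PosSemidef) : (Λ A).PosSemidef :=
  (hΛ 1 (A.submatrix Prod.snd Prod.snd) (hA.submatrix _)).submatrix fun i => (0, i)

section PsiM

variable {M : ℕ}

lemma isHermitian_PsiM : (PsiM M).IsHermitian := by
  ext; simp [PsiM]

lemma PsiM_mul_self : PsiM M * PsiM M = PsiM M := by
  ext i j
  have hM : (M : ℂ) ≠ 0 := Nat.cast_ne_zero.mpr (Fin.pos i).ne'
  simp only [PsiM, mul_apply, of_apply, Finset.sum_const, Finset.card_univ, Fintype.card_fin,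
    nsmul_eq_mul]
  field_simp

lemma posSemidef_PsiM : (PsiM M).PosSemidef := by
  have h := posSemidef_conjTranspose_mul_self (PsiM M)
  rwa [isHermitian_PsiM.eq, PsiM_mul_self] at h

lemma posSemidef_one_sub_PsiM : (1 - PsiM M).PosSemidef :=
  posSemidef_one_sub_of_mul_self isHermitian_PsiM PsiM_mul_self

lemma trace_PsiM (hM : M ≠ 0) : (PsiM M).trace = 1 := by
  simp only [trace, PsiM, diag_apply, of_apply, Finset.sum_const, Finset.card_univ,
    Fintype.card_fin, nsmul_eq_mul]
  field_simp

lemma trace_PsiM_mul_dephase (ω : Matrix (Fin M) (Fin M) ℂ) :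
    (PsiM M * dephase ω).trace = (M : ℂ)⁻¹ * ω.trace := by
  simp [PsiM, dephase, trace, Finset.mul_sum]

lemma natCast_smul_dephase_PsiM : (M : ℂ) • dephase (PsiM M) = 1 := by
  ext i j
  have hM : (M : ℂ) ≠ 0 := Nat.cast_ne_zero.mpr (Fin.pos i).ne'
  by_cases hij : i = j
  · subst hij
    simp only [dephase, PsiM, of_apply, Matrix.smul_apply, diagonal_apply_eq, smul_eq_mul,
      one_apply_eq]
    field_simp
  · simp [PsiM, dephase, hij]

end PsiM

section Dilution

variable {σ : Matrix ι ι ℂ} {M : ℕ}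

noncomputable def dilutionComplement (σ : Matrix ι ι ℂ) (M : ℕ) : Matrix ι ι ℂ :=
  ((M : ℂ) - 1)⁻¹ • ((M : ℂ) • dephase σ - σ)

omit [Fintype ι] in
lemma posSemidef_dilutionComplement (hM : 1 ≤ M) (hσ : (M : ℝ) ∈ dephasingRatios σ) :
    (dilutionComplement σ M).PosSemidef := by
  have h := hσ.2.smul
    (Complex.zero_le_real.mpr (inv_nonneg.mpr (sub_nonneg.mpr (Nat.one_le_cast.mpr hM))))
  rw [RCLike.real_smul_eq_coe_smul (K := ℂ)] at h
  simpa [dilutionComplement] using h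

lemma trace_dilutionComplement (hM : M ≠ 1) (hσ : σ.trace = 1) :
    (dilutionComplement σ M).trace = 1 := by
  have hM' : (M : ℂ) - 1 ≠ 0 := sub_ne_zero.mpr (by exact_mod_cast hM)
  simp [dilutionComplement, trace_sub, trace_dephase, hσ, hM']

omit [Fintype ι] in
lemma dephase_dilutionComplement (hM : M ≠ 1) :
    dephase (dilutionComplement σ M) = dephase σ := by
  have hM' : (M : ℂ) - 1 ≠ 0 := sub_ne_zero.mpr (by exact_mod_cast hM)
  rw [dilutionComplement, dephase_smul, dephase_sub, dephase_smul, dephase_dephase]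
  nth_rw 2 [← one_smul ℂ (dephase σ)]
  rw [← sub_smul, smul_smul, inv_mul_cancel₀ hM', one_smul]

omit [Fintype ι] in
lemma inv_smul_add_one_sub_inv_smul_dilutionComplement (hM₀ : M ≠ 0) (hM₁ : M ≠ 1) :
    (M : ℂ)⁻¹ • σ + (1 - (M : ℂ)⁻¹) • dilutionComplement σ M = dephase σ := by
  have hM₀' : (M : ℂ) ≠ 0 := by exact_mod_cast hM₀
  have hM₁' : (M : ℂ) - 1 ≠ 0 := sub_ne_zero.mpr (by exact_mod_cast hM₁)
  have hc : (1 - (M : ℂ)⁻¹) * ((M : ℂ) - 1)⁻¹ = (M : ℂ)⁻¹ := by field_simp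
  rw [dilutionComplement, smul_smul, hc, smul_sub, smul_smul, inv_mul_cancel₀ hM₀', one_smul]
  abel

noncomputable def dilutionChannel (σ : Matrix ι ι ℂ) (M : ℕ) :
    Matrix (Fin M) (Fin M) ℂ →ₗ[ℂ] Matrix ι ι ℂ :=
  measurePrepare (PsiM M) σ + measurePrepare (1 - PsiM M) (dilutionComplement σ M)

omit [Fintype ι] in
lemma dilutionChannel_apply (X : Matrix (Fin M) (Fin M) ℂ) :
    dilutionChannel σ M X =
      (PsiM M * X).trace • σ + (X.trace - (PsiM M * X).trace) • dilutionComplement σ M := by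
  simp [dilutionChannel, sub_mul, trace_sub]

lemma completelyPositive_dilutionChannel (hM : 1 ≤ M) (hσ : σ.PosSemidef)
    (hσM : (M : ℝ) ∈ dephasingRatios σ) : CompletelyPositive (dilutionChannel σ M) :=
  (completelyPositive_measurePrepare posSemidef_PsiM hσ).add
    (completelyPositive_measurePrepare posSemidef_one_sub_PsiM
      (posSemidef_dilutionComplement hM hσM))

lemma tracePreserving_dilutionChannel (hM : M ≠ 1) (hσ : σ.trace = 1) :
    TracePreserving (dilutionChannel σ M) := by
  intro X
  simp [dilutionChannel_apply, trace_dilutionComplement hM hσ, hσ]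

omit [Fintype ι] in
lemma dilutionChannel_dephase (hM₀ : M ≠ 0) (hM₁ : M ≠ 1) (ω : Matrix (Fin M) (Fin M) ℂ) :
    dilutionChannel σ M (dephase ω) = dephase (dilutionChannel σ M ω) := by
  have lhs : dilutionChannel σ M (dephase ω) = ω.trace • dephase σ := by
    rw [dilutionChannel_apply, trace_PsiM_mul_dephase, trace_dephase,
      ← inv_smul_add_one_sub_inv_smul_dilutionComplement hM₀ hM₁, smul_add, smul_smul,
      smul_smul]
    congr 2 <;> ring
  rw [lhs, dilutionChannel_apply, dephase_add, dephase_smul, dephase_smul,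
    dephase_dilutionComplement hM₁, ← add_smul, add_sub_cancel]

omit [Fintype ι] in
lemma dilutionChannel_PsiM (hM : M ≠ 0) : dilutionChannel σ M (PsiM M) = σ := by
  simp [dilutionChannel_apply, PsiM_mul_self, trace_PsiM hM]

end Dilution

lemma exists_dio_apply_PsiM_eq {σ : Matrix ι ι ℂ} (hσ : IsState σ) :
    ∃ M : ℕ, 1 ≤ M ∧ Real.logb 2 M ≤ CDmax σ + 1 ∧
      ∃ Λ : Matrix (Fin M) (Fin M) ℂ →ₗ[ℂ] Matrix ι ι ℂ,
        CompletelyPositive Λ ∧ TracePreserving Λ ∧ (∀ ω, Λ (dephase ω) = dephase (Λ ω)) ∧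
        Λ (PsiM M) = σ := by
  obtain ⟨M, hM, hσM, hlog⟩ := exists_nat_mem_dephasingRatios hσ
  exact ⟨M, by omega, hlog, dilutionChannel σ M,
    completelyPositive_dilutionChannel (by omega) hσ.1 hσM,
    tracePreserving_dilutionChannel (by omega) hσ.2,
    dilutionChannel_dephase (by omega) (by omega), dilutionChannel_PsiM (by omega)⟩

section Monotonicity

variable {M : ℕ} {Λ : Matrix (Fin M) (Fin M) ℂ →ₗ[ℂ] Matrix ι ι ℂ}

omit [DecidableEq ι] in
lemma isState_apply_PsiM (hM : M ≠ 0) (hcp : CompletelyPositive Λ) (htp : TracePreserving Λ) :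
    IsState (Λ (PsiM M)) :=
  ⟨hcp.map_posSemidef posSemidef_PsiM, by rw [htp, trace_PsiM hM]⟩

lemma CDmax_apply_PsiM_le (hM : M ≠ 0) (hcp : CompletelyPositive Λ) (htp : TracePreserving Λ)
    (hcov : ∀ ω, Λ (dephase ω) = dephase (Λ ω)) : CDmax (Λ (PsiM M)) ≤ Real.logb 2 M := by
  refine CDmax_le_logb_of_mem (isState_apply_PsiM hM hcp htp) ⟨Nat.cast_nonneg M, ?_⟩
  have h : (M : ℝ) • dephase (Λ (PsiM M)) - Λ (PsiM M) = Λ (1 - PsiM M) := by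
    rw [Nat.cast_smul_eq_nsmul, ← Nat.cast_smul_eq_nsmul ℂ, ← hcov, ← map_smul,
      natCast_smul_dephase_PsiM, map_sub]
  exact h ▸ hcp.map_posSemidef posSemidef_one_sub_PsiM

end Monotonicity

open scoped MatrixOrder in
lemma msqrt_eq_sqrt {A : Matrix ι ι ℂ} (hA : A.PosSemidef) : msqrt A = CFC.sqrt A := by
  rw [msqrt, dif_pos hA, CFC.sqrt_eq_cfc, cfc_nnreal_eq_real _ A, hA.1.cfc_eq, IsHermitian.cfc,
    Unitary.conjStarAlgAut_apply]
  congr 3 with i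
  simp [hA.eigenvalues_nonneg i]

open scoped MatrixOrder in
lemma Fid_self {ρ : Matrix ι ι ℂ} (hρ : IsState ρ) : Fid ρ ρ = 1 := by
  have hsq : CFC.sqrt ρ * ρ * CFC.sqrt ρ = ρ ^ 2 := by
    have hs := CFC.sqrt_mul_sqrt_self ρ hρ.1.nonneg
    nth_rw 2 [← hs]
    rw [← mul_assoc, mul_assoc (CFC.sqrt ρ * CFC.sqrt ρ), hs, sq]
  rw [Fid, msqrt_eq_sqrt hρ.1, hsq, msqrt_eq_sqrt (hρ.1.pow 2), CFC.sqrt_sq ρ hρ.1.nonneg,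
    hρ.2]
  norm_num

lemma CDIOeps_le_CDmax_add_one {ρ σ : Matrix ι ι ℂ} {ε : ℝ} (hσ : IsState σ)
    (hfid : 1 - ε ≤ Fid ρ σ) : CDIOeps ρ ε ≤ CDmax σ + 1 := by
  obtain ⟨M, hM, hlog, Λ, hcp, htp, hcov, hΛ⟩ := exists_dio_apply_PsiM_eq hσ
  refine le_trans (b := Real.logb 2 M)
    (csInf_le ⟨0, ?_⟩ ⟨M, hM, rfl, Λ, hcp, htp, hcov, hΛ ▸ hfid⟩) hlog
  rintro _ ⟨N, hN, rfl, -⟩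
  exact Real.logb_nonneg one_lt_two (by exact_mod_cast hN)

lemma CDmaxeps_le_logb {ρ : Matrix ι ι ℂ} {ε : ℝ} {M : ℕ} (hM : M ≠ 0)
    {Λ : Matrix (Fin M) (Fin M) ℂ →ₗ[ℂ] Matrix ι ι ℂ} (hcp : CompletelyPositive Λ)
    (htp : TracePreserving Λ) (hcov : ∀ ω, Λ (dephase ω) = dephase (Λ ω))
    (hfid : 1 - ε ≤ Fid ρ (Λ (PsiM M))) : CDmaxeps ρ ε ≤ Real.logb 2 M := by
  refine le_trans (b := CDmax (Λ (PsiM M)))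
    (csInf_le ⟨0, ?_⟩ ⟨_, isState_apply_PsiM hM hcp htp, hfid, rfl⟩)
    (CDmax_apply_PsiM_le hM hcp htp hcov)
  rintro _ ⟨σ, hσ, -, rfl⟩
  exact CDmax_nonneg hσ

/-- Theorem 5: `C_{Δ,max}^ε(ρ) ≤ C_DIO^ε(ρ) ≤ C_{Δ,max}^ε(ρ) + 1`. -/
theorem CDIOeps_bounds {d : ℕ} (ρ : Matrix (Fin d) (Fin d) ℂ) (hρ : IsState ρ)
    (ε : ℝ) (hε : 0 ≤ ε) :
    CDmaxeps ρ ε ≤ CDIOeps ρ ε ∧ CDIOeps ρ ε ≤ CDmaxeps ρ ε + 1 := by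
  have hfid : 1 - ε ≤ Fid ρ ρ := by rw [Fid_self hρ]; linarith
  constructor
  · obtain ⟨M, hM, -, Λ, hcp, htp, hcov, hΛ⟩ := exists_dio_apply_PsiM_eq hρ
    refine le_csInf ⟨_, M, hM, rfl, Λ, hcp, htp, hcov, hΛ ▸ hfid⟩ ?_
    rintro _ ⟨N, hN, rfl, Λ', hcp', htp', hcov', hfid'⟩
    exact CDmaxeps_le_logb (by omega) hcp' htp' hcov' hfid'
  · suffices CDIOeps ρ ε - 1 ≤ CDmaxeps ρ ε by linarith
    refine le_csInf ⟨_, ρ, hρ, hfid, rfl⟩ ?_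
    rintro _ ⟨σ, hσ, hfidσ, rfl⟩
    linarith [CDIOeps_le_CDmax_add_one hσ hfidσ]

end OneShot
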